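/- arXiv:2502.19744 — 2 statements merged into one kernel-verified Lean document; each statement's English description precedes it below -/
import Mathlib

section
/- For every profile of matroid rank hospital valuations and strict complete doctor preference orders, the HWSD-optimal allocation is stable. -/
open Finset

/-- A matroid rank function on subsets of a finite ground set. -/
def IsMRF {α : Type*} [DecidableEq α] (v : Finset α → ℤ) : Prop :=
  v ∅ = 0 ∧
  (∀ (S : Finset α) (d : α), d ∉ S →
    v (insert d S) - v S = 0 ∨ v (insert d S) - v S = 1) ∧
  (∀ (S T : Finset α) (d : α), S ⊆ T → d ∉ T →
    v (insert d T) - v T ≤ v (insert d S) - v S)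

/-- The bundle of doctors assigned to hospital `h` under allocation `X`. -/
def bundle {n m : ℕ} (X : Fin m → Option (Fin n)) (h : Fin n) : Finset (Fin m) :=
  Finset.univ.filter (fun d => X d = some h)

/-- An allocation is non-redundant if every hospital's bundle is independent. -/
def NonRedundant {n m : ℕ} (v : Fin n → Finset (Fin m) → ℤ)
    (X : Fin m → Option (Fin n)) : Prop :=
  ∀ h, v h (bundle X h) = (bundle X h).card

/-- Hospital utilitarian welfare. -/
def USW {n m : ℕ} (v : Fin n → Finset (Fin m) → ℤ) (X : Fin m → Option (Fin n)) : ℤ :=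
  ∑ h, v h (bundle X h)

/-- Doctor `d` strictly prefers the first outcome to the second; every hospital is
strictly preferred to being unallocated (`none`). -/
def OptStrictPref {n m : ℕ} (P : Fin m → Fin n → Fin n → Prop) (d : Fin m) :
    Option (Fin n) → Option (Fin n) → Prop
  | some h, some h' => P d h h'
  | some _, none => True
  | none, _ => False

/-- `(h, S)` is a blocking pair for `X`. -/
def IsBlockingPair {n m : ℕ} (v : Fin n → Finset (Fin m) → ℤ)
    (P : Fin m → Fin n → Fin n → Prop) (X : Fin m → Option (Fin n))
    (h : Fin n) (S : Finset (Fin m)) : Prop :=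
  v h S = S.card ∧ v h (bundle X h) < v h S ∧
    ∀ d ∈ S, X d = some h ∨ OptStrictPref P d (some h) (X d)

/-- An allocation is stable if it is non-redundant and admits no blocking pair. -/
def Stable {n m : ℕ} (v : Fin n → Finset (Fin m) → ℤ)
    (P : Fin m → Fin n → Fin n → Prop) (X : Fin m → Option (Fin n)) : Prop :=
  NonRedundant v X ∧ ¬ ∃ h S, IsBlockingPair v P X h S

/-- The HWSD ordering on non-redundant allocations: `X` beats `Y`. -/
def HWSDgt {n m : ℕ} (v : Fin n → Finset (Fin m) → ℤ)
    (P : Fin m → Fin n → Fin n → Prop) (X Y : Fin m → Option (Fin n)) : Prop :=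
  USW v Y < USW v X ∨
  (USW v X = USW v Y ∧ ∃ j : Fin m,
    OptStrictPref P j (X j) (Y j) ∧ ∀ k : Fin m, k < j → X k = Y k)

/-- `X` is the HWSD-optimal allocation: the greatest non-redundant allocation in the
HWSD ordering (the output of the High Welfare Serial Dictatorship mechanism). -/
def IsHWSDOpt {n m : ℕ} (v : Fin n → Finset (Fin m) → ℤ)
    (P : Fin m → Fin n → Fin n → Prop) (X : Fin m → Option (Fin n)) : Prop :=
  NonRedundant v X ∧ ∀ Y, NonRedundant v Y → Y ≠ X → HWSDgt v P X Y

/-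
A blocking pair `(h, S)` lets hospital `h` gain a doctor: since `v h S > v h X_h`,
submodularity yields `d ∈ S \ X_h` with `X_h + d` independent. Moving `d` to `h` keeps the
allocation non-redundant and, since the welfare of a non-redundant allocation is the number of
allocated doctors, does not lower welfare. The two allocations differ only at `d`, who strictly
prefers `h`, so the new one is HWSD-greater, contradicting optimality.
-/

namespace IsMRF

variable {α : Type*} [DecidableEq α] {v : Finset α → ℤ}

lemma le_insert (hv : IsMRF v) {S : Finset α} {d : α} (hd : d ∉ S) :
    v S ≤ v (insert d S) := by
  rcases hv.2.1 S d hd with h | h <;> omega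

lemma insert_le_add_one (hv : IsMRF v) {S : Finset α} {d : α} (hd : d ∉ S) :
    v (insert d S) ≤ v S + 1 := by
  rcases hv.2.1 S d hd with h | h <;> omega

lemma le_card (hv : IsMRF v) (S : Finset α) : v S ≤ #S := by
  induction S using Finset.induction_on with
  | empty => simp [hv.1]
  | @insert d S hd ih =>
    rw [card_insert_of_notMem hd]
    push_cast
    linarith [hv.insert_le_add_one hd]

lemma mono (hv : IsMRF v) {S T : Finset α} (hST : S ⊆ T) : v S ≤ v T := by
  suffices ∀ U, v S ≤ v (S ∪ U) by simpa [union_eq_right.mpr hST] using this T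
  intro U
  induction U using Finset.induction_on with
  | empty => simp
  | @insert d U _ ih =>
    rw [union_insert]
    by_cases hd : d ∈ S ∪ U
    · rwa [insert_eq_self.mpr hd]
    · exact ih.trans (hv.le_insert hd)

lemma erase_eq_card (hv : IsMRF v) {S : Finset α} (hS : v S = #S) (d : α) :
    v (S.erase d) = #(S.erase d) := by
  by_cases hd : d ∈ S
  · have hle := hv.insert_le_add_one (notMem_erase d S)
    rw [insert_erase hd] at hle
    have := hv.le_card (S.erase d)
    rw [cast_card_erase_of_mem hd] at this ⊢
    linarith
  · rwa [erase_eq_of_notMem hd]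

lemma union_eq_of_forall_insert_eq (hv : IsMRF v) (T U : Finset α)
    (hU : ∀ d ∈ U, d ∉ T → v (insert d T) = v T) : v (T ∪ U) = v T := by
  induction U using Finset.induction_on with
  | empty => simp
  | @insert a U _ ih =>
    have ih := ih fun d hd => hU d (mem_insert_of_mem hd)
    rw [union_insert]
    by_cases ha : a ∈ T ∪ U
    · rw [insert_eq_self.mpr ha, ih]
    · have haT : a ∉ T := fun h => ha (mem_union_left U h)
      have hsub := hv.2.2 T (T ∪ U) a subset_union_left ha
      have := hv.le_insert ha
      linarith [hU a (mem_insert_self a U) haT]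

lemma exists_insert_eq_add_one (hv : IsMRF v) {S T : Finset α} (hlt : v T < v S) :
    ∃ d ∈ S, d ∉ T ∧ v (insert d T) = v T + 1 := by
  by_contra! hno
  have hflat : ∀ d ∈ S, d ∉ T → v (insert d T) = v T := fun d hd hdT =>
    (hv.2.1 T d hdT).elim (by omega) fun h => absurd (by omega) (hno d hd hdT)
  have := hv.mono (subset_union_right : S ⊆ T ∪ S)
  linarith [hv.union_eq_of_forall_insert_eq T S hflat]

end IsMRF

section Allocation

variable {n m : ℕ} {v : Fin n → Finset (Fin m) → ℤ} {X Y : Fin m → Option (Fin n)}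

lemma bundle_update_self (X : Fin m → Option (Fin n)) (d : Fin m) (h : Fin n) :
    bundle (Function.update X d (some h)) h = insert d (bundle X h) := by
  ext e
  by_cases he : e = d <;> simp [bundle, Function.update, he]

lemma bundle_update_of_ne (X : Fin m → Option (Fin n)) (d : Fin m) {h h' : Fin n}
    (hne : h' ≠ h) :
    bundle (Function.update X d (some h)) h' = (bundle X h').erase d := by
  ext e
  by_cases he : e = d <;> simp [bundle, Function.update, he, Ne.symm hne]

lemma nonRedundant_update (hv : ∀ h, IsMRF (v h)) (hX : NonRedundant v X) {d : Fin m}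
    {h : Fin n} (hd : d ∉ bundle X h)
    (hgain : v h (insert d (bundle X h)) = v h (bundle X h) + 1) :
    NonRedundant v (Function.update X d (some h)) := by
  intro h'
  by_cases hh' : h' = h
  · subst hh'
    rw [bundle_update_self, hgain, hX h', card_insert_of_notMem hd]
    push_cast
    ring
  · rw [bundle_update_of_ne X d hh']
    exact (hv h').erase_eq_card (hX h') d

lemma USW_eq_card_allocated (hX : NonRedundant v X) :
    USW v X = #{d | X d ≠ none} := by
  rw [USW, sum_congr rfl fun h _ => hX h]
  simp only [bundle, card_filter]
  push_cast
  rw [sum_comm]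
  refine sum_congr rfl fun d _ => ?_
  cases X d <;> simp

lemma USW_le_USW (hX : NonRedundant v X) (hY : NonRedundant v Y)
    (hXY : ∀ d, X d ≠ none → Y d ≠ none) : USW v X ≤ USW v Y := by
  rw [USW_eq_card_allocated hX, USW_eq_card_allocated hY]
  exact_mod_cast card_le_card (monotone_filter_right _ fun d _ => hXY d)

lemma OptStrictPref.asymm {P : Fin m → Fin n → Fin n → Prop} {d : Fin m}
    (hP : Std.Asymm (P d)) {a b : Option (Fin n)} (hab : OptStrictPref P d a b) :
    ¬ OptStrictPref P d b a := by
  cases a <;> cases b <;> simp_all only [OptStrictPref, not_false_eq_true]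
  exact hP.asymm _ _ hab

lemma not_HWSDgt_update {P : Fin m → Fin n → Fin n → Prop} (hP : ∀ d, Std.Asymm (P d))
    {d : Fin m} {h : Fin n} (hd : OptStrictPref P d (some h) (X d))
    (hUSW : USW v X ≤ USW v (Function.update X d (some h))) :
    ¬ HWSDgt v P X (Function.update X d (some h)) := by
  rintro (hlt | ⟨-, j, hj, -⟩)
  · exact hUSW.not_gt hlt
  · by_cases hjd : j = d
    · subst hjd
      rw [Function.update_self] at hj
      exact OptStrictPref.asymm (hP j) hd hj
    · rw [Function.update_of_ne hjd] at hj
      exact OptStrictPref.asymm (hP j) hj hj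

end Allocation

/-- The HWSD-optimal allocation is stable. -/
theorem hwsd_opt_stable {n m : ℕ} (v : Fin n → Finset (Fin m) → ℤ)
    (P : Fin m → Fin n → Fin n → Prop)
    (hv : ∀ h, IsMRF (v h)) (hP : ∀ d, IsStrictTotalOrder (Fin n) (P d))
    (X : Fin m → Option (Fin n)) (hX : IsHWSDOpt v P X) :
    Stable v P X := by
  refine ⟨hX.1, ?_⟩
  rintro ⟨h, S, -, hlt, hpref⟩
  obtain ⟨d, hdS, hdX, hgain⟩ := (hv h).exists_insert_eq_add_one hlt
  have hXd : X d ≠ some h := fun hXd => hdX (by simp [bundle, hXd])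
  have hprefd : OptStrictPref P d (some h) (X d) := (hpref d hdS).resolve_left hXd
  have hY := nonRedundant_update hv hX.1 hdX hgain
  have hYX : Function.update X d (some h) ≠ X := fun hYX =>
    hXd (by rw [← congrFun hYX d, Function.update_self])
  have hUSW : USW v X ≤ USW v (Function.update X d (some h)) :=
    USW_le_USW hX.1 hY fun e he => by
      rw [Function.update_apply]
      split_ifs <;> simp [he]
  have hasymm : ∀ d, Std.Asymm (P d) := fun d => by have := hP d; infer_instance
  exact not_HWSDgt_update hasymm hprefd hUSW (hX.2 _ hY hYX)
end

section
/- Suppose all hospitals have binary capped additive valuations and doctors have strict complete preference orders. Fix a hospital h and a set T ⊆ D with v_h(T) = |T|, and define f_T(S) = |S ∩ T| for S ⊆ D. Fixing all other hospitals' valuations and all doctor preferences, let X be the HWSD-optimal allocation when h's valuation is replaced by f_T, and let Y be the HWSD-optimal allocation when h reports its true valuation v_h. If X_h = T, then |Y_h| ≥ |T|. -/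
open Finset

/-- A binary capped additive valuation. -/
def IsBinaryCappedAdditive {α : Type*} (v : Finset α → ℤ) : Prop :=
  ∃ (b : ℕ) (w : α → ℤ), 0 < b ∧ (∀ d, w d = 0 ∨ w d = 1) ∧
    ∀ S : Finset α, v S = min (b : ℤ) (∑ d ∈ S, w d)

/-!
Suppose `#(bundle Y h) < #T = #(bundle X h)`. Send each doctor from her hospital under `X` to her
hospital under `Y`. Hospital `h` has a surplus, and a hospital that is full under `X` sends away at
least as many doctors as it receives, so a path starting at `h` reaches either a doctor unallocated
under `Y` or a hospital with spare capacity under `X`, without ever re-entering `h`. For capped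
additive valuations non-redundancy only concerns approvals and capacities, so exchanging the
assignments of the doctors on this path keeps both allocations non-redundant, and the two welfare
changes cancel. Optimality of `X` and `Y` makes both exchanges welfare ties, and then the first
exchanged doctor would have to prefer each of her two hospitals to the other.
-/

section NetOutflow

variable {ι V : Type*} [DecidableEq V]

def netOutflow (tail head : ι → V) (E : Finset ι) (v : V) : ℤ :=
  ∑ e ∈ E, ((if tail e = v then 1 else 0) - (if head e = v then 1 else 0))

variable {tail head : ι → V}

lemma netOutflow_insert [DecidableEq ι] {E : Finset ι} {e : ι} (he : e ∉ E) (v : V) :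
    netOutflow tail head (insert e E) v = netOutflow tail head E v +
      ((if tail e = v then 1 else 0) - (if head e = v then 1 else 0)) := by
  rw [netOutflow, sum_insert he, add_comm, netOutflow]

lemma netOutflow_sdiff [DecidableEq ι] {C E : Finset ι} (hC : C ⊆ E) (v : V) :
    netOutflow tail head (E \ C) v = netOutflow tail head E v - netOutflow tail head C v :=
  sum_sdiff_eq_sub hC

lemma netOutflow_swap (E : Finset ι) (v : V) :
    netOutflow head tail E v = -netOutflow tail head E v := by
  rw [netOutflow, netOutflow, ← sum_neg_distrib]
  exact sum_congr rfl fun _ _ => by ring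

lemma exists_tail_eq_of_netOutflow_pos {E : Finset ι} {s : V}
    (hpos : 0 < netOutflow tail head E s) : ∃ e ∈ E, tail e = s := by
  by_contra! hnone
  refine hpos.not_ge (sum_nonpos fun e he => ?_)
  rw [if_neg (hnone e he)]
  split_ifs <;> norm_num

/-- `M` is the edge set of a path from `s` to `t`. -/
theorem exists_path_of_netOutflow_pos [DecidableEq ι] (E : Finset ι)
    (hloop : ∀ e ∈ E, tail e ≠ head e) (targets : Set V) (s : V) (hs : s ∉ targets)
    (hpos : 0 < netOutflow tail head E s)
    (hbal : ∀ v, v ≠ s → v ∉ targets → 0 ≤ netOutflow tail head E v) :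
    ∃ t ∈ targets, ∃ M ⊆ E,
      (∀ v, netOutflow tail head M v = (if s = v then 1 else 0) - (if t = v then 1 else 0)) ∧
      ∀ e ∈ M, head e ∈ insert s targets → head e = t := by
  induction E using Finset.strongInduction generalizing targets s with
  | H E ih =>
  obtain ⟨e, heE, hes⟩ := exists_tail_eq_of_netOutflow_pos hpos
  have hws : head e ≠ s := hes ▸ (hloop e heE).symm
  by_cases hwT : head e ∈ targets
  · refine ⟨head e, hwT, {e}, singleton_subset_iff.2 heE, fun v => ?_, fun e' he' _ => by
      rw [mem_singleton.1 he']⟩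
    rw [netOutflow, sum_singleton, hes]
  have hsplit := netOutflow_insert (tail := tail) (head := head) (notMem_erase e E)
  rw [insert_erase heE, hes] at hsplit
  -- Continue from `head e` without `e`; reaching `s` again closes a cycle, which is discarded.
  obtain ⟨t, htT, M, hME, hflow, hhead⟩ := ih (E.erase e) (erase_ssubset heE)
    (fun e' he' => hloop e' (mem_of_mem_erase he')) (insert s targets) (head e)
    (by simp [hws, hwT])
    (by have := hbal _ hws hwT; rw [hsplit, if_neg hws.symm, if_pos rfl] at this; linarith)
    (fun v hvw hvT => by
      rw [Set.mem_insert_iff, not_or] at hvT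
      have := hbal v hvT.1 hvT.2
      rwa [hsplit, if_neg (Ne.symm hvT.1), if_neg (Ne.symm hvw), sub_zero, add_zero] at this)
  have heM : e ∉ M := fun h => (notMem_erase e E) (hME h)
  have hC : insert e M ⊆ E := insert_subset heE (hME.trans (erase_subset e E))
  rcases Set.mem_insert_iff.1 htT with rfl | htT
  · have hcyc : ∀ v, netOutflow tail head (insert e M) v = 0 := fun v => by
      rw [netOutflow_insert heM, hflow, hes]; ring
    obtain ⟨t, htT, M', hM', hflow', hhead'⟩ := ih (E \ insert e M)
      (sdiff_ssubset hC (insert_nonempty e M)) (fun e' he' => hloop e' (mem_sdiff.1 he').1)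
      targets t hs (by rwa [netOutflow_sdiff hC, hcyc, sub_zero])
      (fun v hv hvT => by rw [netOutflow_sdiff hC, hcyc, sub_zero]; exact hbal v hv hvT)
    exact ⟨t, htT, M', hM'.trans sdiff_subset, hflow', hhead'⟩
  · refine ⟨t, htT, insert e M, hC, fun v => ?_, fun e' he' hmem => ?_⟩
    · rw [netOutflow_insert heM, hflow, hes]; ring
    · rcases mem_insert.1 he' with rfl | he'
      · simp_all
      · exact hhead e' he' (Set.mem_insert_of_mem _ hmem)

end NetOutflow

lemma IsBinaryCappedAdditive.exists_eq_card_iff {α : Type*} {v : Finset α → ℤ}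
    (hv : IsBinaryCappedAdditive v) :
    ∃ (b : ℕ) (A : Set α), ∀ S : Finset α, v S = #S ↔ ↑S ⊆ A ∧ #S ≤ b := by
  obtain ⟨b, w, -, hw01, hv⟩ := hv
  refine ⟨b, {d | w d = 1}, fun S => ?_⟩
  have hle : ∀ d ∈ S, w d ≤ 1 := fun d _ => by rcases hw01 d with h | h <;> simp [h]
  have hsum : ∑ d ∈ S, w d ≤ #S := by simpa using sum_le_sum hle
  have hall : ∑ d ∈ S, w d = #S ↔ ↑S ⊆ {d | w d = 1} := by
    rw [cast_card, sum_eq_sum_iff_of_le hle]; rfl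
  rw [hv, ← hall]
  omega

section Allocation

variable {n m : ℕ}

lemma mem_bundle {X : Fin m → Option (Fin n)} {g : Fin n} {d : Fin m} :
    d ∈ bundle X g ↔ X d = some g := by
  simp [bundle]

lemma optStrictPref_asymm {P : Fin m → Fin n → Fin n → Prop}
    (hP : ∀ d, IsStrictTotalOrder (Fin n) (P d)) {d : Fin m} {o o' : Option (Fin n)}
    (h : OptStrictPref P d o o') : ¬ OptStrictPref P d o' o := by
  match o, o' with
  | some _, some _ => have := hP d; exact asymm_of (P d) h
  | some _, none => exact id
  | none, _ => exact h.elim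

lemma card_unallocated_add_sum_card_bundle (Z : Fin m → Option (Fin n)) :
    #{d | Z d = none} + ∑ g, #(bundle Z g) = m := by
  have := card_eq_sum_card_fiberwise (s := univ) (t := univ) (fun d _ => mem_univ (Z d))
  rwa [Fintype.sum_option, card_univ, Fintype.card_fin, eq_comm] at this

lemma NonRedundant.usw_eq {v : Fin n → Finset (Fin m) → ℤ} {Z : Fin m → Option (Fin n)}
    (hZ : NonRedundant v Z) : USW v Z = m - #{d | Z d = none} := by
  have := card_unallocated_add_sum_card_bundle Z
  rw [USW, sum_congr rfl fun g _ => hZ g]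
  linarith

lemma card_unallocated_piecewise_add (Z W : Fin m → Option (Fin n)) (M : Finset (Fin m)) :
    #{d | M.piecewise Z W d = none} + #{d | M.piecewise W Z d = none}
      = #{d | Z d = none} + #{d | W d = none} := by
  simp only [card_filter, ← sum_add_distrib]
  refine sum_congr rfl fun d _ => ?_
  by_cases hd : d ∈ M <;> simp [hd, add_comm]

lemma isLeast_of_lex_piecewise {P : Fin m → Fin n → Fin n → Prop}
    (hP : ∀ d, IsStrictTotalOrder (Fin n) (P d)) {Z W : Fin m → Option (Fin n)}
    {M : Finset (Fin m)} (hZW : ∀ d ∈ M, Z d ≠ W d) {j : Fin m}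
    (hj : OptStrictPref P j (Z j) (M.piecewise W Z j))
    (hbelow : ∀ k < j, Z k = M.piecewise W Z k) : IsLeast (M : Set (Fin m)) j := by
  refine ⟨?_, fun k hk => not_lt.1 fun hkj => hZW k hk ?_⟩
  · by_contra hjM
    rw [piecewise_eq_of_notMem _ _ _ hjM] at hj
    exact optStrictPref_asymm hP hj hj
  · rw [hbelow k hkj, piecewise_eq_of_mem _ _ _ hk]

/-- The two welfare changes cancel, so both exchanges are welfare ties, and then the first
exchanged doctor would have to prefer each of her two hospitals to the other. -/
theorem IsHWSDOpt.not_nonRedundant_exchange {v₁ v₂ : Fin n → Finset (Fin m) → ℤ}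
    {P : Fin m → Fin n → Fin n → Prop} (hP : ∀ d, IsStrictTotalOrder (Fin n) (P d))
    {X Y : Fin m → Option (Fin n)} (hX : IsHWSDOpt v₁ P X) (hY : IsHWSDOpt v₂ P Y)
    {M : Finset (Fin m)} (hM : M.Nonempty) (hXY : ∀ d ∈ M, X d ≠ Y d) :
    ¬ (NonRedundant v₁ (M.piecewise Y X) ∧ NonRedundant v₂ (M.piecewise X Y)) := by
  rintro ⟨hX', hY'⟩
  obtain ⟨d, hd⟩ := hM
  have hne : ∀ {Z W : Fin m → Option (Fin n)}, Z d ≠ W d → M.piecewise W Z ≠ Z :=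
    fun hZW h => hZW (by rw [← h, piecewise_eq_of_mem _ _ _ hd])
  have hsum := card_unallocated_piecewise_add Y X M
  have hX₁ := hX'.usw_eq; have hX₂ := hX.1.usw_eq
  have hY₁ := hY'.usw_eq; have hY₂ := hY.1.usw_eq
  rcases hX.2 _ hX' (hne (hXY d hd)) with hlt | ⟨heq, j₁, hj₁, hbelow₁⟩
  · rcases hY.2 _ hY' (hne (hXY d hd).symm) with hlt' | ⟨heq', -⟩ <;> omega
  rcases hY.2 _ hY' (hne (hXY d hd).symm) with hlt' | ⟨-, j₂, hj₂, hbelow₂⟩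
  · omega
  have h₁ := isLeast_of_lex_piecewise hP hXY hj₁ hbelow₁
  have h₂ := isLeast_of_lex_piecewise hP (fun d hd => (hXY d hd).symm) hj₂ hbelow₂
  obtain rfl := h₁.unique h₂
  rw [piecewise_eq_of_mem _ _ _ h₁.1] at hj₁ hj₂
  exact optStrictPref_asymm hP hj₁ hj₂

lemma card_bundle_piecewise (Z W : Fin m → Option (Fin n)) (M : Finset (Fin m)) (g : Fin n) :
    (#(bundle (M.piecewise Z W) g) : ℤ) = #(bundle W g) + netOutflow Z W M (some g) := by
  rw [netOutflow, ← univ_inter M, ← sum_ite_mem]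
  simp only [bundle, card_filter]
  push_cast
  rw [← sum_add_distrib]
  refine sum_congr rfl fun d _ => ?_
  by_cases hd : d ∈ M <;> simp [hd]

lemma nonRedundant_piecewise {v : Fin n → Finset (Fin m) → ℤ} {b : Fin n → ℕ}
    {A : Fin n → Set (Fin m)} (hbA : ∀ g S, v g S = #S ↔ ↑S ⊆ A g ∧ #S ≤ b g)
    {Z W : Fin m → Option (Fin n)} {M : Finset (Fin m)} (hW : NonRedundant v W)
    (hZA : ∀ d ∈ M, ∀ g, Z d = some g → d ∈ A g)
    (hcap : ∀ g, #(bundle W g) + netOutflow Z W M (some g) ≤ b g) :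
    NonRedundant v (M.piecewise Z W) := by
  refine fun g => (hbA g _).2 ⟨fun d hd => ?_, ?_⟩
  swap
  · have := card_bundle_piecewise Z W M g
    have := hcap g
    omega
  rw [mem_coe, mem_bundle] at hd
  by_cases hdM : d ∈ M
  · exact hZA d hdM g (by rwa [piecewise_eq_of_mem _ _ _ hdM] at hd)
  · rw [piecewise_eq_of_notMem _ _ _ hdM] at hd
    exact ((hbA g _).1 (hW g)).1 (mem_bundle.2 hd)

lemma update_inter_card_eq_card_iff {v : Fin n → Finset (Fin m) → ℤ} {b : Fin n → ℕ}
    {A : Fin n → Set (Fin m)} (hbA : ∀ g S, v g S = #S ↔ ↑S ⊆ A g ∧ #S ≤ b g)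
    {h : Fin n} {T : Finset (Fin m)} (hTb : #T ≤ b h) (g : Fin n) (S : Finset (Fin m)) :
    Function.update v h (fun S => (#(S ∩ T) : ℤ)) g S = #S ↔
      ↑S ⊆ Function.update A h ↑T g ∧ #S ≤ b g := by
  rcases eq_or_ne g h with rfl | hg
  · simp only [Function.update_self, Nat.cast_inj, coe_subset]
    refine ⟨fun hS => ?_, fun hS => by rw [inter_eq_left.2 hS.1]⟩
    have hST : S ⊆ T := inter_eq_left.1 (eq_of_subset_of_card_le inter_subset_left hS.ge)
    exact ⟨hST, (card_le_card hST).trans hTb⟩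
  · simp only [Function.update_of_ne hg, hbA]

/-- `M` is the set of doctors on a path from `h` to `t` in which each doctor leads from her hospital
under `X` to her hospital under `Y`; `t = none` means the path ends with a doctor unallocated under
`Y`. -/
lemma exists_alternating_path {X Y : Fin m → Option (Fin n)} {b : Fin n → ℕ} {h : Fin n}
    (hY : ∀ g, #(bundle Y g) ≤ b g) (hlt : #(bundle Y h) < #(bundle X h)) :
    ∃ t : Option (Fin n), t ≠ some h ∧ (∀ g, t = some g → #(bundle X g) < b g) ∧
      ∃ M : Finset (Fin m), (∀ d ∈ M, X d ≠ Y d ∧ Y d ≠ some h) ∧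
        ∀ g, netOutflow X Y M (some g) =
          (if h = g then 1 else 0) - (if t = some g then 1 else 0) := by
  set E : Finset (Fin m) := {d | X d ≠ Y d}
  have hXE : E.piecewise X Y = X := funext fun d => by
    by_cases hd : d ∈ E
    · exact piecewise_eq_of_mem _ _ _ hd
    · rw [piecewise_eq_of_notMem _ _ _ hd]; exact (by simpa [E] using hd : X d = Y d).symm
  have hnet g : netOutflow X Y E (some g) = #(bundle X g) - #(bundle Y g) := by
    have := card_bundle_piecewise X Y E g
    rw [hXE] at this
    omega
  obtain ⟨t, ht, M, hME, hflow, hhead⟩ :=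
    exists_path_of_netOutflow_pos (tail := X) (head := Y) E (by simp [E])
    -- `none` belongs to this set vacuously
    {o | ∀ g, o = some g → g ≠ h ∧ #(bundle X g) < b g} (some h) (by simp)
    (by rw [hnet]; omega)
    (fun o ho hoT => by
      obtain ⟨g, rfl, hg⟩ : ∃ g, o = some g ∧ (g ≠ h → b g ≤ #(bundle X g)) := by
        simpa using hoT
      have := hg (fun hgh => ho (congrArg some hgh))
      have := hY g
      rw [hnet]
      omega)
  have hth : t ≠ some h := fun hth => (ht h hth).1 rfl
  refine ⟨t, hth, fun g htg => (ht g htg).2, M, fun d hd => ⟨by simpa [E] using hME hd, ?_⟩,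
    fun g => by simp only [hflow, Option.some_inj]⟩
  exact fun hYd => hth (hYd ▸ hhead d hd (hYd ▸ Set.mem_insert _ _)).symm

lemma exists_exchange {v : Fin n → Finset (Fin m) → ℤ} {b : Fin n → ℕ}
    {A : Fin n → Set (Fin m)} (hbA : ∀ g S, v g S = #S ↔ ↑S ⊆ A g ∧ #S ≤ b g)
    {h : Fin n} {T : Finset (Fin m)} (hTA : ↑T ⊆ A h) (hTb : #T ≤ b h)
    {X Y : Fin m → Option (Fin n)} (hX : NonRedundant (Function.update v h (fun S => (#(S ∩ T) : ℤ))) X)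
    (hY : NonRedundant v Y) (hXh : bundle X h = T) (hlt : #(bundle Y h) < #T) :
    ∃ M : Finset (Fin m), M.Nonempty ∧ (∀ d ∈ M, X d ≠ Y d) ∧
      NonRedundant (Function.update v h (fun S => (#(S ∩ T) : ℤ))) (M.piecewise Y X) ∧
      NonRedundant v (M.piecewise X Y) := by
  have hbA' := update_inter_card_eq_card_iff hbA hTb
  have hXA g : ↑(bundle X g) ⊆ A g := by
    rcases eq_or_ne g h with rfl | hg
    · rwa [hXh]
    · simpa [Function.update_of_ne hg] using ((hbA' g _).1 (hX g)).1
  have hXb g := ((hbA' g _).1 (hX g)).2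
  have hYA g := ((hbA g _).1 (hY g)).1
  have hYb g := ((hbA g _).1 (hY g)).2
  obtain ⟨t, hth, htb, M, hMXY, hflow⟩ := exists_alternating_path hYb (hXh ▸ hlt)
  refine ⟨M, nonempty_iff_ne_empty.2 fun hM => ?_, fun d hd => (hMXY d hd).1, ?_, ?_⟩
  · have := hflow h
    simp [hM, netOutflow, hth] at this
  · refine nonRedundant_piecewise hbA' hX (fun d hd g hYd => ?_) fun g => ?_
    · have hg : g ≠ h := fun hg => (hMXY d hd).2 (hg ▸ hYd)
      simpa [Function.update_of_ne hg] using hYA g (mem_bundle.2 hYd)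
    · rw [netOutflow_swap, hflow]
      rcases eq_or_ne g h with rfl | hg
      · simp only [if_neg hth, hXh]
        omega
      · by_cases htg : t = some g
        · simp only [if_neg hg.symm, if_pos htg]
          linarith [htb g htg]
        · simp only [if_neg hg.symm, if_neg htg]
          linarith [hXb g]
  · refine nonRedundant_piecewise hbA hY (fun d _ g hXd => hXA g (mem_bundle.2 hXd)) fun g => ?_
    rw [hflow]
    rcases eq_or_ne g h with rfl | hg
    · simp only [if_neg hth]
      omega
    · simp only [if_neg hg.symm]
      split_ifs <;> linarith [hYb g]

end Allocation

/-- With binary capped additive hospital valuations, if reporting `f_T` (for an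
independent set `T`) gives hospital `h` exactly the bundle `T`, then truthful
reporting gives `h` a bundle of size at least `|T|`. -/
theorem hwsd_truthful_full_capped_additive {n m : ℕ} (v : Fin n → Finset (Fin m) → ℤ)
    (P : Fin m → Fin n → Fin n → Prop)
    (hv : ∀ h, IsBinaryCappedAdditive (v h)) (hP : ∀ d, IsStrictTotalOrder (Fin n) (P d))
    (h : Fin n) (T : Finset (Fin m)) (hT : v h T = T.card)
    (X Y : Fin m → Option (Fin n))
    (hX : IsHWSDOpt (Function.update v h (fun S => ((S ∩ T).card : ℤ))) P X)
    (hY : IsHWSDOpt v P Y)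
    (hXh : bundle X h = T) :
    T.card ≤ (bundle Y h).card := by
  by_contra! hlt
  choose b A hbA using fun g => (hv g).exists_eq_card_iff
  obtain ⟨hTA, hTb⟩ := (hbA h T).1 hT
  obtain ⟨M, hM, hXY, hX', hY'⟩ := exists_exchange hbA hTA hTb hX.1 hY.1 hXh hlt
  exact hX.not_nonRedundant_exchange hP hY hM hXY ⟨hX', hY'⟩
end
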